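/- arXiv:2311.08988 — 5 statements merged into one kernel-verified Lean document; each statement's English description precedes it below -/
import Mathlib

section
/- Let H be a finite simple graph, p a prime, Γ ⊆ Aut(H) a p-group, and Φ a graph property. Then χ̂(Φ,H) ≡ Σ_{A ∈ fp(Γ,H)} Φ(A)·(−1)^{|E(A)|} (mod p), where the sum ranges over all fixed points of Γ in H. -/
open scoped Classical

/-!
Statement 2: For a finite graph `H`, a prime `p`, a `p`-group `Γ ⊆ Aut(H)`, and a graph
property `Φ`, the alternating enumerator `χ̂(Φ,H)` is congruent modulo `p` to the sum of
`Φ(A)·(−1)^{|E(A)|}` over all fixed points `A` of `Γ` in `H`.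
-/

/-- `A` is a fixed point of `Γ` in `H`. -/
def IsFixedPoint {V : Type*} (Γ : Subgroup (Equiv.Perm V)) (H A : SimpleGraph V) : Prop :=
  A ≤ H ∧ ∀ g ∈ Γ, Sym2.map (⇑g) '' A.edgeSet = A.edgeSet

/-- The alternating enumerator `χ̂(Φ,H) = Σ_{S ⊆ E(H)} Φ(H[S])·(−1)^{|S|}`,
where `H[S]` is the edge-subgraph of `H` with edge set `S`. -/
noncomputable def altEnum {V : Type*} [Fintype V] [DecidableEq V]
    (Φ : SimpleGraph V → Prop) (H : SimpleGraph V) : ℤ :=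
  ∑ S ∈ H.edgeFinset.powerset,
    if Φ (SimpleGraph.fromEdgeSet (S : Set (Sym2 V))) then (-1 : ℤ) ^ S.card else 0

open MulAction in
/-- A `p`-group sum congruence: for a `p`-group `G` acting on a fintype `X`, the sum of an
invariant function over an invariant finset is congruent mod `p` to the sum over its
fixed points. -/
private lemma sum_modEq_fixed {p : ℕ} (hp : p.Prime) {G : Type*} [Group G] [Finite G]
    (hG : IsPGroup p G) {X : Type*} [Fintype X] [MulAction G X]
    (s : Finset X) (hs : ∀ (g : G), ∀ x ∈ s, g • x ∈ s) (f : X → ℤ)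
    (hf : ∀ (g : G) (x : X), f (g • x) = f x) :
    ∑ x ∈ s, f x ≡ ∑ x ∈ s.filter (fun x => ∀ g : G, g • x = x), f x [ZMOD p] := by
  classical
  have hsplit := Finset.sum_filter_add_sum_filter_not s (fun x => ∀ g : G, g • x = x) f
  set N := s.filter (fun x => ¬ ∀ g : G, g • x = x) with hN
  have hNinv : ∀ (g : G), ∀ y ∈ N, g • y ∈ N := by
    intro g y hy
    rw [hN, Finset.mem_filter] at hy ⊢
    refine ⟨hs g y hy.1, fun h => hy.2 fun g' => ?_⟩
    have := h (g * g' * g⁻¹)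
    rwa [mul_smul, mul_smul, inv_smul_smul, smul_left_cancel_iff] at this
  haveI : Fact p.Prime := ⟨hp⟩
  have hdvd : (p : ℤ) ∣ ∑ x ∈ N, f x := by
    haveI : NeZero p := ⟨hp.pos.ne'⟩
    rw [← ZMod.intCast_zmod_eq_zero_iff_dvd]
    push_cast
    rw [← Finset.sum_fiberwise_of_maps_to
      (g := fun x => (Quotient.mk'' x : Quotient (orbitRel G X)))
      (t := Finset.univ) (fun x _ => Finset.mem_univ _) (fun x => ((f x : ZMod p)))]
    refine Finset.sum_eq_zero fun q _ => ?_
    by_cases hq : (N.filter fun x =>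
        (Quotient.mk'' x : Quotient (orbitRel G X)) = q).Nonempty
    · obtain ⟨x, hx⟩ := hq
      obtain ⟨hxN, hxq⟩ := Finset.mem_filter.mp hx
      haveI : Fintype (orbit G x) := Fintype.ofFinite _
      have hfiber : (N.filter fun y =>
          (Quotient.mk'' y : Quotient (orbitRel G X)) = q) = (orbit G x).toFinset := by
        ext y
        simp only [Finset.mem_filter, Set.mem_toFinset]
        constructor
        · rintro ⟨-, hyq⟩
          have : (Quotient.mk'' y : Quotient (orbitRel G X)) = Quotient.mk'' x := by
            rw [hyq, hxq]
          exact Quotient.eq''.mp this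
        · rintro ⟨g, rfl⟩
          exact ⟨hNinv g x hxN, by rw [← hxq]; exact Quotient.sound' (mem_orbit x g)⟩
      rw [hfiber]
      have hconst : ∀ y ∈ (orbit G x).toFinset, ((f y : ZMod p)) = ((f x : ZMod p)) := by
        intro y hy
        obtain ⟨g, rfl⟩ := Set.mem_toFinset.mp hy
        rw [hf]
      rw [Finset.sum_congr rfl hconst, Finset.sum_const, nsmul_eq_mul]
      have hcard : p ∣ (orbit G x).toFinset.card := by
        obtain ⟨n, hn⟩ := hG.card_orbit x
        rw [Set.toFinset_card, ← Nat.card_eq_fintype_card, hn]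
        rcases Nat.eq_zero_or_pos n with rfl | hn'
        · exfalso
          have h1 : Nat.card (orbit G x) = 1 := by rw [hn, pow_zero]
          rw [Nat.card_eq_fintype_card] at h1
          have := (mem_fixedPoints_iff_card_orbit_eq_one (M := G)).mpr h1
          exact (Finset.mem_filter.mp hxN).2 (mem_fixedPoints.mp this)
        · exact dvd_pow_self p hn'.ne'
      have : ((orbit G x).toFinset.card : ZMod p) = 0 := by
        rw [ZMod.natCast_eq_zero_iff]
        exact hcard
      rw [this, zero_mul]
    · rw [Finset.not_nonempty_iff_eq_empty.mp hq, Finset.sum_empty]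
  calc ∑ x ∈ s, f x
      = (∑ x ∈ s.filter (fun x => ∀ g : G, g • x = x), f x) + ∑ x ∈ N, f x := hsplit.symm
    _ ≡ (∑ x ∈ s.filter (fun x => ∀ g : G, g • x = x), f x) + 0 [ZMOD p] :=
        (Int.ModEq.refl _).add (Int.modEq_zero_iff_dvd.mpr hdvd)
    _ = _ := add_zero _

/-- `Sym2.map` of a permutation, as an embedding. -/
def sym2Emb {V : Type*} (g : Equiv.Perm V) : Sym2 V ↪ Sym2 V :=
  ⟨Sym2.map ⇑g, Sym2.map.injective g.injective⟩

/-- The action of permutations of `V` on finsets of edges. -/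
instance sym2FinsetAction {V : Type*} :
    MulAction (Equiv.Perm V) (Finset (Sym2 V)) where
  smul g S := S.map (sym2Emb g)
  one_smul S := by
    show S.map (sym2Emb 1) = S
    ext e
    simp [sym2Emb, Finset.mem_map, Equiv.Perm.coe_one, Sym2.map_id]
  mul_smul g h S := by
    show S.map (sym2Emb (g * h)) = (S.map (sym2Emb h)).map (sym2Emb g)
    ext e
    simp only [Finset.mem_map, sym2Emb, Function.Embedding.coeFn_mk]
    constructor
    · rintro ⟨a, ha, rfl⟩
      exact ⟨Sym2.map (⇑h) a, ⟨a, ha, rfl⟩, by rw [Sym2.map_map]; rfl⟩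
    · rintro ⟨b, ⟨a, ha, rfl⟩, rfl⟩
      exact ⟨a, ha, by rw [Sym2.map_map]; rfl⟩

lemma sym2_smul_def {V : Type*} (g : Equiv.Perm V) (S : Finset (Sym2 V)) :
    g • S = S.map (sym2Emb g) := rfl

lemma sym2_smul_coe {V : Type*} (g : Equiv.Perm V) (S : Finset (Sym2 V)) :
    ((g • S : Finset (Sym2 V)) : Set (Sym2 V)) = Sym2.map ⇑g '' (S : Set (Sym2 V)) := by
  rw [sym2_smul_def, Finset.coe_map]; rfl

lemma sym2_mem_smul {V : Type*} (g : Equiv.Perm V) (S : Finset (Sym2 V)) (e : Sym2 V) :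
    e ∈ g • S ↔ ∃ a ∈ S, Sym2.map ⇑g a = e := by
  rw [sym2_smul_def, Finset.mem_map]; rfl

lemma sym2_smul_card {V : Type*} (g : Equiv.Perm V) (S : Finset (Sym2 V)) :
    (g • S : Finset (Sym2 V)).card = S.card := by
  rw [sym2_smul_def, Finset.card_map]

theorem stmt_2 {V : Type*} [Fintype V] [DecidableEq V]
    (H : SimpleGraph V) (p : ℕ) (hp : p.Prime)
    (Γ : Subgroup (Equiv.Perm V))
    (hAut : ∀ g ∈ Γ, ∀ u v : V, H.Adj (g u) (g v) ↔ H.Adj u v)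
    (hΓ : IsPGroup p Γ)
    (Φ : SimpleGraph V → Prop)
    (hΦiso : ∀ A B : SimpleGraph V, Nonempty (A ≃g B) → (Φ A ↔ Φ B)) :
    altEnum Φ H ≡
      (∑ A ∈ Finset.univ.filter (fun A : SimpleGraph V => IsFixedPoint Γ H A),
        if Φ A then (-1 : ℤ) ^ A.edgeSet.ncard else 0) [ZMOD p] := by
  classical
  set f : Finset (Sym2 V) → ℤ :=
    fun S => if Φ (SimpleGraph.fromEdgeSet (S : Set (Sym2 V))) then (-1 : ℤ) ^ S.card else 0
    with hfdef
  have hmapmem : ∀ g ∈ Γ, ∀ e ∈ H.edgeSet, Sym2.map ⇑g e ∈ H.edgeSet := by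
    intro g hg e he
    induction e with
    | _ u v =>
      rw [Sym2.map_pair_eq, SimpleGraph.mem_edgeSet] at *
      exact (hAut g hg u v).mpr he
  have hs : ∀ (γ : Γ), ∀ S ∈ H.edgeFinset.powerset, γ • S ∈ H.edgeFinset.powerset := by
    intro γ S hS
    rw [Finset.mem_powerset] at hS ⊢
    intro e he
    rw [Subgroup.smul_def] at he
    obtain ⟨e', he', rfl⟩ := (sym2_mem_smul _ _ _).mp he
    rw [SimpleGraph.mem_edgeFinset]
    exact hmapmem _ γ.2 e' (SimpleGraph.mem_edgeFinset.mp (hS he'))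
  have hf : ∀ (γ : Γ) (S : Finset (Sym2 V)), f (γ • S) = f S := by
    intro γ S
    have hinj : Function.Injective (Sym2.map ⇑(γ : Equiv.Perm V)) :=
      Sym2.map.injective (γ : Equiv.Perm V).injective
    have hiso : Nonempty ((SimpleGraph.fromEdgeSet (S : Set (Sym2 V))) ≃g
        (SimpleGraph.fromEdgeSet ((γ • S : Finset (Sym2 V)) : Set (Sym2 V)))) := by
      refine ⟨⟨(γ : Equiv.Perm V), ?_⟩⟩
      intro u v
      simp only [SimpleGraph.fromEdgeSet_adj, Subgroup.smul_def, sym2_smul_coe,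
        Set.mem_image, Finset.mem_coe]
      constructor
      · rintro ⟨⟨e, he, heq⟩, hne⟩
        have : e = s(u, v) := by
          apply hinj
          rw [heq, Sym2.map_pair_eq]
        subst this
        exact ⟨he, fun h => hne (by rw [h])⟩
      · rintro ⟨he, hne⟩
        exact ⟨⟨s(u, v), he, by rw [Sym2.map_pair_eq]⟩,
          fun h => hne ((γ : Equiv.Perm V).injective h)⟩
    have hcard : (γ • S : Finset (Sym2 V)).card = S.card := by
      rw [Subgroup.smul_def, sym2_smul_card]
    simp only [hfdef]
    rw [hΦiso _ _ hiso, hcard]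
  have key := sum_modEq_fixed (G := Γ) (X := Finset (Sym2 V)) hp hΓ
    H.edgeFinset.powerset hs f hf
  have heq : (∑ S ∈ H.edgeFinset.powerset.filter (fun S => ∀ γ : Γ, γ • S = S), f S) =
      (∑ A ∈ Finset.univ.filter (fun A : SimpleGraph V => IsFixedPoint Γ H A),
        if Φ A then (-1 : ℤ) ^ A.edgeSet.ncard else 0) := by
    refine Finset.sum_bij'
      (fun S _ => SimpleGraph.fromEdgeSet (S : Set (Sym2 V)))
      (fun A _ => A.edgeFinset) ?_ ?_ ?_ ?_ ?_
    · intro S hS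
      rw [Finset.mem_filter] at hS
      obtain ⟨hS1, hS2⟩ := hS
      rw [Finset.mem_powerset] at hS1
      have hsub : (S : Set (Sym2 V)) ⊆ H.edgeSet := fun e he =>
        SimpleGraph.mem_edgeFinset.mp (hS1 he)
      have hedge : (SimpleGraph.fromEdgeSet (S : Set (Sym2 V))).edgeSet
          = (S : Set (Sym2 V)) := by
        rw [SimpleGraph.edgeSet_fromEdgeSet, sdiff_eq_self_iff_disjoint]
        exact Set.disjoint_left.mpr fun e he h => H.not_isDiag_of_mem_edgeSet (hsub h) he
      rw [Finset.mem_filter]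
      refine ⟨Finset.mem_univ _, ?_, ?_⟩
      · calc SimpleGraph.fromEdgeSet (S : Set (Sym2 V))
            ≤ SimpleGraph.fromEdgeSet H.edgeSet := SimpleGraph.fromEdgeSet_mono hsub
          _ = H := SimpleGraph.fromEdgeSet_edgeSet H
      · intro g hg
        rw [hedge]
        have h1 := hS2 ⟨g, hg⟩
        rw [Subgroup.smul_def] at h1
        calc Sym2.map ⇑g '' (S : Set (Sym2 V))
            = ((g • S : Finset (Sym2 V)) : Set (Sym2 V)) := (sym2_smul_coe g S).symm
          _ = (S : Set (Sym2 V)) := by rw [h1]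
    · intro A hA
      rw [Finset.mem_filter] at hA
      obtain ⟨-, hA1, hA2⟩ := hA
      rw [Finset.mem_filter, Finset.mem_powerset]
      constructor
      · intro e he
        rw [SimpleGraph.mem_edgeFinset] at he ⊢
        exact SimpleGraph.edgeSet_mono hA1 he
      · intro γ
        rw [Subgroup.smul_def]
        apply Finset.coe_injective
        rw [sym2_smul_coe, SimpleGraph.coe_edgeFinset]
        exact hA2 _ γ.2
    · intro S hS
      apply Finset.coe_injective
      rw [Finset.mem_filter, Finset.mem_powerset] at hS
      have hsub : (S : Set (Sym2 V)) ⊆ H.edgeSet := fun e he =>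
        SimpleGraph.mem_edgeFinset.mp (hS.1 he)
      rw [SimpleGraph.coe_edgeFinset, SimpleGraph.edgeSet_fromEdgeSet, sdiff_eq_self_iff_disjoint]
      exact Set.disjoint_left.mpr fun e he h => H.not_isDiag_of_mem_edgeSet (hsub h) he
    · intro A _
      show SimpleGraph.fromEdgeSet (↑A.edgeFinset : Set (Sym2 V)) = A
      rw [SimpleGraph.coe_edgeFinset, SimpleGraph.fromEdgeSet_edgeSet]
    · intro S hS
      rw [Finset.mem_filter, Finset.mem_powerset] at hS
      have hsub : (S : Set (Sym2 V)) ⊆ H.edgeSet := fun e he =>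
        SimpleGraph.mem_edgeFinset.mp (hS.1 he)
      have hedge : (SimpleGraph.fromEdgeSet (S : Set (Sym2 V))).edgeSet
          = (S : Set (Sym2 V)) := by
        rw [SimpleGraph.edgeSet_fromEdgeSet, sdiff_eq_self_iff_disjoint]
        exact Set.disjoint_left.mpr fun e he h => H.not_isDiag_of_mem_edgeSet (hsub h) he
      simp only [hfdef, hedge, Set.ncard_coe_finset]
  have h1 : altEnum Φ H = ∑ S ∈ H.edgeFinset.powerset, f S := by rw [altEnum]
  rw [h1]
  refine key.trans ?_
  rw [Finset.filter_congr_decidable, heq]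
end

section
/- For integers 0 ≤ c ≤ n, let M be the (n−c+1)×(n−c+1) integer matrix with entries M_{i,j} = (−1)^j · C(n−j, i+c−j) for i,j ∈ {0,…,n−c}, where the binomial coefficient C(a,b) is 0 whenever b < 0 or b > a. Then det(M) ∈ {−1, 1}; in particular, for every prime p the matrix M is invertible over the field F_p. -/
/-!
Reversing the order of rows and columns turns `M` into `(C(c + j, i))_{i,j}` times a diagonal
matrix of signs. By Vandermonde's identity `C(c + j, i) = ∑_k C(c, i - k) C(j, k)`, the matrix
`(C(c + j, i))` is a lower unitriangular matrix times an upper unitriangular one, so its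
determinant is `1` and `det M = ±1`.
-/

open Matrix Finset

theorem Nat.add_choose_eq_sum_range (c j i : ℕ) :
    (c + j).choose i = ∑ k ∈ range (i + 1), c.choose (i - k) * j.choose k := by
  rw [add_comm, Nat.add_choose_eq, Nat.sum_antidiagonal_eq_sum_range_succ
    (fun a b => j.choose a * c.choose b)]
  exact sum_congr rfl fun _ _ => mul_comm _ _

section Pascal

variable {R : Type*} [CommRing R]

theorem Matrix.of_choose_add_eq_mul (c m : ℕ) :
    (of fun i j : Fin m => ((c + j : ℕ).choose i : R)) =
      (of fun i k : Fin m => if k ≤ i then (c.choose (i - k) : R) else 0) *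
        of fun k j : Fin m => ((j : ℕ).choose k : R) := by
  ext i j
  have hi : (i : ℕ) + 1 ≤ m := i.isLt
  simp only [of_apply, mul_apply, ite_mul, zero_mul, Fin.le_def]
  rw [Fin.sum_univ_eq_sum_range (fun k => if k ≤ (i : ℕ) then
      (c.choose (i - k) : R) * (j : ℕ).choose k else 0), ← sum_filter,
    Nat.add_choose_eq_sum_range]
  push_cast
  refine sum_congr ?_ fun _ _ => rfl
  ext k
  simp only [mem_range, mem_filter]
  omega

theorem Matrix.det_of_choose_add (c m : ℕ) :
    (of fun i j : Fin m => ((c + j : ℕ).choose i : R)).det = 1 := by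
  rw [of_choose_add_eq_mul, det_mul, det_of_isLowerTriangular, det_of_isUpperTriangular]
  · simp
  · intro k j hjk
    simp [Nat.choose_eq_zero_of_lt (show (j : ℕ) < k from hjk)]
  · intro i k hik
    simp [not_le.mpr (show i < k from hik)]

end Pascal

theorem stmt_5 (n c : ℕ) (hc : c ≤ n)
    (M : Matrix (Fin (n - c + 1)) (Fin (n - c + 1)) ℤ)
    (hM : ∀ i j : Fin (n - c + 1),
      M i j = if (j : ℕ) ≤ (i : ℕ) + c
        then (-1 : ℤ) ^ (j : ℕ) * ((n - (j : ℕ)).choose ((i : ℕ) + c - (j : ℕ)) : ℤ)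
        else 0) :
    (M.det = 1 ∨ M.det = -1) ∧
      ∀ p : ℕ, p.Prime → IsUnit (M.map (fun x : ℤ => (x : ZMod p))).det := by
  have hrev : M.submatrix Fin.revPerm Fin.revPerm =
      (of fun i j : Fin (n - c + 1) => ((c + j : ℕ).choose i : ℤ)) *
        diagonal fun j : Fin (n - c + 1) => (-1) ^ (n - c - j) := by
    ext i j
    have hi : (i.rev : ℕ) = n - c - i := by rw [Fin.val_rev]; omega
    have hj : (j.rev : ℕ) = n - c - j := by rw [Fin.val_rev]; omega
    rw [submatrix_apply, Fin.revPerm_apply, Fin.revPerm_apply, hM, hi, hj, mul_diagonal,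
      of_apply]
    split_ifs with h
    · rw [show n - (n - c - j) = c + j by omega,
        show n - c - i + c - (n - c - j) = c + j - i by omega,
        Nat.choose_symm (by omega), mul_comm]
    · rw [Nat.choose_eq_zero_of_lt (by omega), Nat.cast_zero, zero_mul]
  have hunit : IsUnit M.det := by
    rw [← det_submatrix_equiv_self Fin.revPerm, hrev, det_mul, det_of_choose_add, one_mul,
      det_diagonal]
    exact IsUnit.prod_univ_iff.mpr fun _ => isUnit_one.neg.pow _
  refine ⟨Int.isUnit_iff.mp hunit, fun p _ => ?_⟩
  simpa only [RingHom.map_det, RingHom.mapMatrix_apply, Int.coe_castRingHom]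
    using hunit.map (Int.castRingHom (ZMod p))
end

section
/- Let p be a prime and m > 0 an integer, and let A ⊊ F_{p^m}^+ be a proper subset. Then for every B ⊆ F_{p^m}^+ with |B| < |F_{p^m}^+| / (|F_{p^m}^+| − |A|), there exists a set B' ⊆ A such that B' is isomorphic to B, i.e. there is λ ∈ F_{p^m}^* with λ·(B ∪ (−B)) = B' ∪ (−B'). -/
/-!
Call `l ∈ F^+` bad if `l·b ∉ A ∪ (−A)` for some `b ∈ B`. Every bad `l` is recovered from a
pair `(b, a) ∈ B × (F^+ \ A)` as the `F^+`-representative of `a / b` (take `a` the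
representative of `l·b`), so there are at most `|B|·(|F^+| − |A|) < |F^+|` bad multipliers.
For a good `l` the symmetric set `S = l·(B ∪ (−B))` lies in `A ∪ (−A)`, hence
`S = B' ∪ (−B')` with `B' = S ∩ A`.
-/

/-- `P` is a valid choice of `F^+`: a set of nonzero elements containing exactly one of
`x` and `−x` for every nonzero `x`. -/
def IsPlusSet {F : Type*} [Field F] (P : Set F) : Prop :=
  0 ∉ P ∧ ∀ x : F, x ≠ 0 → ((x ∈ P ∨ -x ∈ P) ∧ (x ∈ P → -x ∈ P → x = -x))

theorem Set.inter_union_neg_inter_eq_of_neg_eq {α : Type*} [InvolutiveNeg α] {S A : Set α}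
    (hS : -S = S) (hSA : S ⊆ A ∪ -A) : S ∩ A ∪ -(S ∩ A) = S := by
  rw [Set.inter_neg, hS, ← Set.inter_union_distrib_left, Set.inter_eq_left.2 hSA]

open Classical in
noncomputable def plusRep {α : Type*} [Neg α] (P : Set α) (x : α) : α :=
  if x ∈ P then x else -x

theorem plusRep_eq_or_eq_neg {α : Type*} [Neg α] (P : Set α) (x : α) :
    plusRep P x = x ∨ plusRep P x = -x := by
  unfold plusRep
  split_ifs
  exacts [Or.inl rfl, Or.inr rfl]

namespace IsPlusSet

variable {F : Type*} [Field F] {P : Set F}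

theorem ne_zero (hP : IsPlusSet P) {x : F} (hx : x ∈ P) : x ≠ 0 :=
  fun h => hP.1 (h ▸ hx)

theorem plusRep_mem (hP : IsPlusSet P) {x : F} (hx : x ≠ 0) : plusRep P x ∈ P := by
  unfold plusRep
  split_ifs with h
  exacts [h, ((hP.2 x hx).1).resolve_left h]

theorem plusRep_eq_of_mem (hP : IsPlusSet P) {x y : F} (hx : x ∈ P) (hy : y = x ∨ y = -x) :
    plusRep P y = x := by
  unfold plusRep
  rcases hy with rfl | rfl
  · rw [if_pos hx]
  · split_ifs with h
    · exact ((hP.2 x (hP.ne_zero hx)).2 hx h).symm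
    · exact neg_neg x

theorem ncard_setOf_not_mapsTo_mul_le [Finite F] (hP : IsPlusSet P) {A B : Set F}
    (hB : (0 : F) ∉ B) :
    {l ∈ P | ¬ Set.MapsTo (l * ·) B (A ∪ -A)}.ncard ≤ B.ncard * (P \ A).ncard := by
  rw [← Set.ncard_prod]
  refine le_trans (Set.ncard_le_ncard ?_)
    (Set.ncard_image_le (f := fun q => plusRep P (q.2 / q.1)))
  rintro l ⟨hlP, hl⟩
  simp only [Set.MapsTo, not_forall] at hl
  obtain ⟨b, hb, hlb⟩ := hl
  have hb0 : b ≠ 0 := fun h => hB (h ▸ hb)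
  simp only [Set.mem_union, Set.mem_neg, not_or] at hlb
  refine ⟨(b, plusRep P (l * b)), ⟨hb, hP.plusRep_mem (mul_ne_zero (hP.ne_zero hlP) hb0), ?_⟩, ?_⟩
  · rcases plusRep_eq_or_eq_neg P (l * b) with h | h <;> rw [h]
    exacts [hlb.1, hlb.2]
  · refine hP.plusRep_eq_of_mem hlP ?_
    rcases plusRep_eq_or_eq_neg P (l * b) with h | h <;> rw [h]
    · exact Or.inl (mul_div_cancel_right₀ l hb0)
    · exact Or.inr (by rw [neg_div, mul_div_cancel_right₀ l hb0])

end IsPlusSet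

theorem exists_subset_image_mul_union_neg_eq {R : Type*} [Monoid R] [HasDistribNeg R]
    {A B : Set R} {l : R} (hl : Set.MapsTo (l * ·) B (A ∪ -A)) :
    ∃ B' ⊆ A, (fun x => l * x) '' (B ∪ -B) = B' ∪ -B' := by
  set S := (fun x => l * x) '' (B ∪ -B)
  refine ⟨S ∩ A, Set.inter_subset_right, (Set.inter_union_neg_inter_eq_of_neg_eq ?_ ?_).symm⟩
  · ext x
    simp only [S, Set.mem_neg, Set.mem_image, Set.mem_union]
    constructor <;> rintro ⟨y, hy, hxy⟩
    · exact ⟨-y, by simpa [or_comm] using hy, by rw [mul_neg, hxy, neg_neg]⟩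
    · exact ⟨-y, by simpa [or_comm] using hy, by rw [mul_neg, hxy]⟩
  · rintro _ ⟨y, hy | hy, rfl⟩
    · exact hl hy
    · have := hl hy
      simp only [Set.mem_union, Set.mem_neg, neg_neg, mul_neg] at this ⊢
      exact this.symm

theorem stmt_10_general {F : Type*} [Field F] [Fintype F]
    (P : Set F) (hP : IsPlusSet P)
    (A : Set F) (hA : A ⊂ P) :
    ∀ B ⊆ P, (B.ncard : ℚ) < (P.ncard : ℚ) / ((P.ncard : ℚ) - (A.ncard : ℚ)) →
      ∃ B' ⊆ A, ∃ l : F, l ≠ 0 ∧ (fun x => l * x) '' (B ∪ -B) = B' ∪ -B' := by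
  intro B hB hcard
  have hAP : A.ncard < P.ncard := Set.ncard_lt_ncard hA
  have hcard' : B.ncard * (P.ncard - A.ncard) < P.ncard := by
    rw [lt_div_iff₀ (sub_pos.2 (by exact_mod_cast hAP))] at hcard
    exact_mod_cast (show (B.ncard * (P.ncard - A.ncard : ℕ) : ℚ) < P.ncard by
      rwa [Nat.cast_sub hAP.le])
  have hbad : {l ∈ P | ¬ Set.MapsTo (l * ·) B (A ∪ -A)}.ncard < P.ncard :=
    calc _ ≤ B.ncard * (P \ A).ncard := hP.ncard_setOf_not_mapsTo_mul_le fun h => hP.1 (hB h)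
      _ = B.ncard * (P.ncard - A.ncard) := by rw [Set.ncard_sdiff hA.subset]
      _ < P.ncard := hcard'
  obtain ⟨l, hlP, hl⟩ := Set.exists_mem_notMem_of_ncard_lt_ncard hbad
  have hgood : Set.MapsTo (l * ·) B (A ∪ -A) := not_not.1 fun h => hl ⟨hlP, h⟩
  obtain ⟨B', hB'A, hB'⟩ := exists_subset_image_mul_union_neg_eq hgood
  exact ⟨B', hB'A, l, hP.ne_zero hlP, hB'⟩

theorem stmt_10 {F : Type*} [Field F] [Fintype F] [DecidableEq F]
    (p m : ℕ) (hp : p.Prime) (hm : 0 < m) (hF : Fintype.card F = p ^ m)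
    (P : Set F) (hP : IsPlusSet P)
    (A : Set F) (hA : A ⊂ P) :
    ∀ B ⊆ P, (B.ncard : ℚ) < (P.ncard : ℚ) / ((P.ncard : ℚ) - (A.ncard : ℚ)) →
      ∃ B' ⊆ A, ∃ l : F, l ≠ 0 ∧ (fun x => l * x) '' (B ∪ -B) = B' ∪ -B' :=
  stmt_10_general P hP A hA
end

section
/- Let p be a prime and m > 0 an integer, let A ⊊ F_{p^m}^+ be a proper subset, and let Φ be an edge-monotone graph property with Φ(C^A) = 1. Then for every B ⊆ F_{p^m}^+ with |B| < |F_{p^m}^+| / (|F_{p^m}^+| − |A|), we have Φ(C^B) = 1. -/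
open SimpleGraph

/-- Monotonicity of circulant graphs in the connection set. -/
lemma circ_mono {F : Type*} [Field F] (B s : Set F) (h : ∀ b ∈ B, b ∈ s) :
    circulantGraph B ≤ circulantGraph s := by
  intro x y hxy
  rw [circulantGraph_adj] at hxy ⊢
  exact ⟨hxy.1, hxy.2.imp (h _) (h _)⟩

/-- Scaling by a nonzero constant gives an isomorphic circulant graph. -/
lemma circ_iso {F : Type*} [Field F] (c : F) (hc : c ≠ 0) (s : Set F) :
    Nonempty (circulantGraph s ≃g circulantGraph ((c * ·) '' s)) := by
  have key : ∀ u : F, c * u ∈ (c * ·) '' s ↔ u ∈ s := by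
    intro u
    constructor
    · rintro ⟨a, ha, hae⟩
      have : a = u := by
        have := mul_left_cancel₀ hc hae
        simpa using this
      rwa [this] at ha
    · intro hu; exact ⟨u, hu, rfl⟩
  refine ⟨⟨⟨(c * ·), (c⁻¹ * ·), fun x => by field_simp, fun x => by field_simp⟩, ?_⟩⟩
  intro x y
  simp only [circulantGraph_adj, Equiv.coe_fn_mk]
  constructor
  · rintro ⟨hne, hor⟩
    refine ⟨fun h => hne (by rw [h]), ?_⟩
    rcases hor with h | h
    · rw [← mul_sub, key] at h; exact Or.inl h
    · rw [← mul_sub, key] at h; exact Or.inr h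
  · rintro ⟨hne, hor⟩
    refine ⟨fun h => hne (mul_left_cancel₀ hc h), ?_⟩
    rcases hor with h | h
    · exact Or.inl (by rw [← mul_sub, key]; exact h)
    · exact Or.inr (by rw [← mul_sub, key]; exact h)

/-- For a subset `X` of a plus-set `P`, the cardinality of `X ∪ -X`. -/
lemma ncard_union_neg {F : Type*} [Field F] [Fintype F] [DecidableEq F] (P X : Set F)
    (hP : IsPlusSet P) (hX : X ⊆ P) :
    (X ∪ -X).ncard = (if (-1 : F) = 1 then 1 else 2) * X.ncard := by
  have hnegX : (-X).ncard = X.ncard := by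
    have : -X = Neg.neg '' X := by
      ext x
      simp only [Set.mem_neg, Set.mem_image]
      exact ⟨fun h => ⟨-x, h, neg_neg x⟩,
        fun ⟨a, ha, hax⟩ => by rw [← hax, neg_neg]; exact ha⟩
    rw [this, Set.ncard_image_of_injective _ neg_injective]
  split_ifs with h1
  · have hneg : ∀ x : F, -x = x := by
      intro x
      calc -x = -1 * x := by ring
      _ = x := by rw [h1, one_mul]
    have hXX : -X = X := by
      ext x
      rw [Set.mem_neg, hneg]
    rw [hXX, Set.union_self, one_mul]
  · have hdisj : Disjoint X (-X) := by
      rw [Set.disjoint_left]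
      intro x hx hnx
      have hxP : x ∈ P := hX hx
      have hnxP : -x ∈ P := hX (Set.mem_neg.mp hnx)
      have hx0 : x ≠ 0 := fun h => hP.1 (h ▸ hxP)
      have := (hP.2 x hx0).2 hxP hnxP
      -- x = -x, so 2x = 0, so x = 0 since -1 ≠ 1
      apply h1
      have h2x : x + x = 0 := by linear_combination this
      have h2 : (1 + 1 : F) * x = 0 := by ring_nf; linear_combination h2x
      rcases mul_eq_zero.mp h2 with h | h
      · linear_combination -h
      · exact absurd h hx0
    rw [Set.ncard_union_eq hdisj (Set.toFinite X) (Set.toFinite (-X)), hnegX]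
    ring

theorem stmt_11 {F : Type*} [Field F] [Fintype F] [DecidableEq F]
    (p m : ℕ) (hp : p.Prime) (hm : 0 < m) (hF : Fintype.card F = p ^ m)
    (P : Set F) (hP : IsPlusSet P)
    (Φ : SimpleGraph F → Prop)
    (hΦiso : ∀ G₁ G₂ : SimpleGraph F, Nonempty (G₁ ≃g G₂) → (Φ G₁ ↔ Φ G₂))
    (hΦmono : ∀ G₁ G₂ : SimpleGraph F, G₂ ≤ G₁ → Φ G₁ → Φ G₂)
    (A : Set F) (hA : A ⊂ P) (hΦA : Φ (SimpleGraph.circulantGraph A)) :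
    ∀ B ⊆ P, (B.ncard : ℚ) < (P.ncard : ℚ) / ((P.ncard : ℚ) - (A.ncard : ℚ)) →
      Φ (SimpleGraph.circulantGraph B) := by
  classical
  intro B hB hBlt
  -- basic cardinality facts
  have hAP : A.ncard < P.ncard := Set.ncard_lt_ncard hA (Set.toFinite P)
  have hnat : B.ncard * (P.ncard - A.ncard) < P.ncard := by
    have hpos : (0 : ℚ) < (P.ncard : ℚ) - (A.ncard : ℚ) := by
      have : (A.ncard : ℚ) < (P.ncard : ℚ) := by exact_mod_cast hAP
      linarith
    have h1 : (B.ncard : ℚ) * ((P.ncard : ℚ) - (A.ncard : ℚ)) < (P.ncard : ℚ) :=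
      (lt_div_iff₀ hpos).mp hBlt
    have h2 : ((B.ncard * (P.ncard - A.ncard) : ℕ) : ℚ) < (P.ncard : ℚ) := by
      push_cast [Nat.cast_sub hAP.le]
      linarith
    exact_mod_cast h2
  set e : ℕ := if (-1 : F) = 1 then 1 else 2 with he_def
  have he : 0 < e := by rw [he_def]; split_ifs <;> norm_num
  set S : Set F := A ∪ -A with hS_def
  have hScard : S.ncard = e * A.ncard := ncard_union_neg P A hP hA.subset
  have hSPeq : P ∪ -P = {x : F | x ≠ 0} := by
    ext x
    simp only [Set.mem_union, Set.mem_neg, Set.mem_setOf_eq]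
    constructor
    · rintro (h | h)
      · exact fun h0 => hP.1 (h0 ▸ h)
      · intro h0; exact hP.1 (by rwa [h0, neg_zero] at h)
    · intro hx
      exact (hP.2 x hx).1
  have hSPcard : ({x : F | x ≠ 0} : Set F).ncard = e * P.ncard := by
    rw [← hSPeq]; exact ncard_union_neg P P hP le_rfl
  have h0S : (0 : F) ∉ S := by
    rintro (h | h)
    · exact hP.1 (hA.subset h)
    · exact hP.1 (hA.subset (by simpa using Set.mem_neg.mp h))
  -- Finsets
  set T : Finset F := (Set.toFinite S).toFinset with hT_def
  set U : Finset F := (Set.toFinite ({x : F | x ≠ 0} : Set F)).toFinset with hU_def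
  set B' : Finset F := (Set.toFinite B).toFinset with hB'_def
  have hTcard : T.card = e * A.ncard := by
    rw [hT_def, ← Set.ncard_eq_toFinset_card S (Set.toFinite S), hScard]
  have hUcard : U.card = e * P.ncard := by
    rw [hU_def, ← Set.ncard_eq_toFinset_card _ (Set.toFinite _), hSPcard]
  have hB'card : B'.card = B.ncard := by
    rw [hB'_def, ← Set.ncard_eq_toFinset_card B (Set.toFinite B)]
  -- the counting argument: find a good scalar c
  have hgood : ∃ c : F, c ≠ 0 ∧ ∀ b ∈ B, b ∈ (c * ·) '' S := by
    by_contra hcon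
    push_neg at hcon
    have hsub : U ⊆ B'.biUnion (fun b => U \ T.image (fun a => b * a⁻¹)) := by
      intro c hc
      have hc0 : c ≠ 0 := by
        rw [hU_def, Set.Finite.mem_toFinset] at hc; exact hc
      obtain ⟨b, hbB, hbim⟩ := hcon c hc0
      refine Finset.mem_biUnion.mpr ⟨b, (Set.Finite.mem_toFinset _).mpr hbB,
        Finset.mem_sdiff.mpr ⟨hc, ?_⟩⟩
      intro hcmem
      obtain ⟨a, haT, hae⟩ := Finset.mem_image.mp hcmem
      have haS : a ∈ S := (Set.Finite.mem_toFinset _).mp haT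
      have ha0 : a ≠ 0 := fun h => h0S (h ▸ haS)
      exact hbim ⟨a, haS, by rw [← hae]; field_simp⟩
    have hGsub : ∀ b ∈ B', T.image (fun a => b * a⁻¹) ⊆ U := by
      intro b hbB' x hx
      obtain ⟨a, haT, hae⟩ := Finset.mem_image.mp hx
      have haS : a ∈ S := (Set.Finite.mem_toFinset _).mp haT
      have ha0 : a ≠ 0 := fun h => h0S (h ▸ haS)
      have hb : b ∈ B := (Set.Finite.mem_toFinset _).mp hbB'
      have hb0 : b ≠ 0 := fun h => hP.1 (h ▸ hB hb)
      rw [hU_def, Set.Finite.mem_toFinset]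
      rw [← hae]
      exact mul_ne_zero hb0 (inv_ne_zero ha0)
    have hGcard : ∀ b ∈ B', (T.image (fun a => b * a⁻¹)).card = T.card := by
      intro b hbB'
      have hb : b ∈ B := (Set.Finite.mem_toFinset _).mp hbB'
      have hb0 : b ≠ 0 := fun h => hP.1 (h ▸ hB hb)
      apply Finset.card_image_of_injOn
      intro x _ y _ hxy
      have := mul_left_cancel₀ hb0 hxy
      exact inv_injective this
    have hchain : U.card ≤ B'.card * (U.card - T.card) := by
      calc U.card ≤ (B'.biUnion (fun b => U \ T.image (fun a => b * a⁻¹))).card :=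
            Finset.card_le_card hsub
        _ ≤ ∑ b ∈ B', (U \ T.image (fun a => b * a⁻¹)).card := Finset.card_biUnion_le
        _ = ∑ b ∈ B', (U.card - T.card) := by
            apply Finset.sum_congr rfl
            intro b hb
            rw [Finset.card_sdiff_of_subset (hGsub b hb), hGcard b hb]
        _ = B'.card * (U.card - T.card) := by rw [Finset.sum_const, smul_eq_mul]
    rw [hUcard, hTcard, hB'card] at hchain
    have hsub_eq : e * P.ncard - e * A.ncard = e * (P.ncard - A.ncard) :=
      (Nat.mul_sub e P.ncard A.ncard).symm
    rw [hsub_eq] at hchain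
    have : e * P.ncard ≤ e * (B.ncard * (P.ncard - A.ncard)) := by
      calc e * P.ncard ≤ B.ncard * (e * (P.ncard - A.ncard)) := hchain
        _ = e * (B.ncard * (P.ncard - A.ncard)) := by ring
    have := Nat.le_of_mul_le_mul_left this he
    omega
  obtain ⟨c, hc0, hgood⟩ := hgood
  -- graph argument
  have h1 : Φ (circulantGraph S) := by
    rwa [hS_def, ← circulantGraph_eq_symm]
  have h2 : Φ (circulantGraph ((c * ·) '' S)) :=
    (hΦiso _ _ (circ_iso c hc0 S)).mp h1
  exact hΦmono _ _ (circ_mono B _ hgood) h2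
end

section
/- Let Φ be a graph property, H a finite graph, and k a positive integer, and define the graph property (Φ−H) by (Φ−H)(G) = 1 iff Φ(G ⊎ H) = 1. Then for every finite graph G, the number of k-element vertex subsets X ⊆ V(G) whose induced subgraph G[X] satisfies (Φ−H) equals Σ_{X ⊆ V(H)} (−1)^{|X|} · #IndSub(Φ, k + |V(H)|, G ⊎ (H ∖ X)), where the sum ranges over all subsets X of V(H) and H ∖ X denotes H with the vertices in X (and all incident edges) removed. -/
/-!
Let `𝒢 = G ⊎ H` and `n = k + |V(H)|`. Deleting `X ⊆ V(H)` embeds `G ⊎ (H ∖ X)` into `𝒢`, so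
`#IndSub(Φ, n, G ⊎ (H ∖ X))` counts the `n`-subsets `Y` of `V(𝒢)` with `Φ(𝒢[Y])` that avoid `X`.
Inclusion–exclusion over `X` leaves exactly those `Y` that contain all of `V(H)`; these are the
sets `Z ⊎ V(H)` with `|Z| = k`, and `𝒢[Z ⊎ V(H)] ≅ G[Z] ⊎ H`.
-/

open scoped Classical

/-- `#IndSub(Φ, k, G)`: the number of `k`-element vertex subsets `Y ⊆ V(G)` whose
induced subgraph `G[Y]` satisfies `Φ`. -/
noncomputable def countIndSub {α : Type} [Fintype α]
    (Φ : ∀ (β : Type) [Fintype β], SimpleGraph β → Prop) (k : ℕ) (G : SimpleGraph α) : ℕ :=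
  (Finset.univ.filter
    (fun Y : Finset α => Y.card = k ∧ Φ (↑Y : Set α) (G.induce (↑Y : Set α)))).card

open Finset SimpleGraph

theorem sum_neg_one_pow_card_mul_card_filter_subset {ι W : Type*} [Fintype W]
    (S : Finset ι) (t : ι → Finset W) :
    ∑ X : Finset W, (-1 : ℤ) ^ #X * #{i ∈ S | X ⊆ t i} = #{i ∈ S | t i = ∅} := by
  simp_rw [natCast_card_filter, mul_sum]
  rw [sum_comm]
  refine sum_congr rfl fun i _ => ?_
  simp_rw [mul_ite, mul_one, mul_zero, ← sum_filter]
  rw [← sum_powerset_neg_one_pow_card]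
  congr 1
  ext X
  simp

def IsIsoInvariant (Φ : ∀ (β : Type) [Fintype β], SimpleGraph β → Prop) : Prop :=
  ∀ (β γ : Type) [Fintype β] [Fintype γ] (A : SimpleGraph β) (B : SimpleGraph γ),
    Nonempty (A ≃g B) → (Φ β A ↔ Φ γ B)

noncomputable def indSubs {β : Type} [Fintype β]
    (Φ : ∀ (β : Type) [Fintype β], SimpleGraph β → Prop) (n : ℕ) (B : SimpleGraph β) :
    Finset (Finset β) :=
  {Y | #Y = n ∧ Φ (↑Y : Set β) (B.induce ↑Y)}

section IndSub

variable {Φ : ∀ (β : Type) [Fintype β], SimpleGraph β → Prop} (hΦ : IsIsoInvariant Φ)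
include hΦ

theorem IsIsoInvariant.iff_induce_of_range_eq {γ β : Type} [Fintype γ] {A : SimpleGraph γ}
    {B : SimpleGraph β} (f : A ↪g B) {Y : Finset β} (h : Set.range f = ↑Y) :
    Φ γ A ↔ Φ (↑Y : Set β) (B.induce ↑Y) :=
  hΦ _ _ _ _ ⟨h ▸ f.isoInduceRange⟩

theorem countIndSub_eq_card_filter_subset_range {α β : Type} [Fintype α] [Fintype β]
    {A : SimpleGraph α} {B : SimpleGraph β} (f : A ↪g B) (n : ℕ) :
    countIndSub Φ n A = #{Y ∈ indSubs Φ n B | ↑Y ⊆ Set.range f} := by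
  have hΦmap (Z : Finset α) :
      Φ _ (A.induce ↑Z) ↔ Φ _ (B.induce ↑(Z.map f.toEmbedding)) :=
    hΦ.iff_induce_of_range_eq (f.comp (Embedding.induce _)) (by ext; simp)
  change #(indSubs Φ n A) = _
  refine card_nbij (·.map f.toEmbedding) (fun Z hZ => ?_) (Finset.map_injective _).injOn
    (fun Y hY => ?_)
  · simp only [indSubs, coe_filter, mem_filter, mem_univ, true_and, Set.mem_ofPred_eq] at hZ ⊢
    refine ⟨⟨by rw [card_map, hZ.1], (hΦmap Z).1 hZ.2⟩, ?_⟩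
    simp
  · simp only [indSubs, coe_filter, mem_filter, mem_univ, true_and] at hY
    obtain ⟨⟨hcard, hY⟩, hrange⟩ := hY
    obtain ⟨Z, rfl⟩ : ∃ Z : Finset α, Z.map f.toEmbedding = Y := by
      simpa [map_eq_image] using subset_univ_image_iff.1 (by simpa [← coe_subset] using hrange)
    refine ⟨Z, ?_, rfl⟩
    simp only [indSubs, coe_filter, mem_univ, true_and]
    exact ⟨by rwa [card_map] at hcard, (hΦmap Z).2 hY⟩

variable {V W : Type} [Fintype V] [Fintype W] (G : SimpleGraph V) (H : SimpleGraph W)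

theorem countIndSub_sum_induce_compl (n : ℕ) (X : Finset W) :
    countIndSub Φ n (G ⊕g H.induce (↑X : Set W)ᶜ) =
      #{Y ∈ indSubs Φ n (G ⊕g H) | X ⊆ Y.toRightᶜ} := by
  rw [countIndSub_eq_card_filter_subset_range hΦ (Embedding.refl.sum (Embedding.induce _))]
  congr 1
  refine filter_congr fun Y _ => ?_
  constructor
  · intro h w hwX
    rw [mem_compl]
    intro hwY
    obtain ⟨(v | ⟨u, hu⟩), huw⟩ := h (mem_toRight.1 hwY)
    · simp at huw
    · obtain rfl : u = w := by simpa using huw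
      exact hu hwX
  · rintro h (v | w) hY
    · exact ⟨.inl v, rfl⟩
    · exact ⟨.inr ⟨w, fun hwX => absurd hY (by simpa using h hwX)⟩, rfl⟩

theorem card_filter_induce_sum_eq_card_indSubs_filter (k : ℕ) :
    #{Z : Finset V | #Z = k ∧ Φ _ (G.induce ↑Z ⊕g H)} =
      #{Y ∈ indSubs Φ (k + Fintype.card W) (G ⊕g H) | Y.toRightᶜ = ∅} := by
  have hΦsum (Z : Finset V) :
      Φ _ (G.induce ↑Z ⊕g H) ↔ Φ _ ((G ⊕g H).induce ↑(Z.disjSum (univ : Finset W))) :=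
    hΦ.iff_induce_of_range_eq ((Embedding.induce _).sum Embedding.refl) (Y := Z.disjSum univ)
      (by ext (v | w) <;> simp)
  have hdisjSum (Y : Finset (V ⊕ W)) (hY : Y.toRightᶜ = ∅) : Y.toLeft.disjSum univ = Y := by
    rw [disjSum_eq_iff]
    exact ⟨rfl, ((compl_eq_empty_iff _).1 hY).symm⟩
  refine card_nbij' (·.disjSum univ) toLeft (fun Z hZ => ?_) (fun Y hY => ?_)
    (fun Z _ => toLeft_disjSum) (fun Y hY => ?_)
  · simp only [indSubs, coe_filter, mem_filter, mem_univ, true_and, Set.mem_ofPred_eq] at hZ ⊢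
    exact ⟨⟨by rw [card_disjSum, hZ.1, card_univ], (hΦsum Z).1 hZ.2⟩, by simp⟩
  · simp only [indSubs, coe_filter, mem_filter, mem_univ, true_and, Set.mem_ofPred_eq] at hY ⊢
    obtain ⟨⟨hcard, hΦY⟩, hY⟩ := hY
    rw [← hdisjSum Y hY, card_disjSum, card_univ, Nat.add_right_cancel_iff] at hcard
    rw [← hdisjSum Y hY] at hΦY
    exact ⟨hcard, (hΦsum _).2 hΦY⟩
  · exact hdisjSum Y (mem_filter.1 hY).2

end IndSub

theorem stmt_15_general {V W : Type} [Fintype V] [Fintype W]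
    (Φ : ∀ (β : Type) [Fintype β], SimpleGraph β → Prop)
    (hΦiso : ∀ (β γ : Type) [Fintype β] [Fintype γ]
      (A : SimpleGraph β) (B : SimpleGraph γ), Nonempty (A ≃g B) → (Φ β A ↔ Φ γ B))
    (G : SimpleGraph V) (H : SimpleGraph W) (k : ℕ) :
    -- the number of `k`-subsets of `V(G)` whose induced subgraph satisfies `(Φ − H)`
    ((Finset.univ.filter (fun Y : Finset V =>
        Y.card = k ∧ Φ _ ((G.induce (↑Y : Set V)) ⊕g H))).card : ℤ) =
      -- equals the inclusion-exclusion sum over all subsets `X ⊆ V(H)`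
      ∑ X : Finset W, (-1 : ℤ) ^ X.card *
        (countIndSub Φ (k + Fintype.card W)
          (G ⊕g (H.induce ((↑X : Set W)ᶜ))) : ℤ) := by
  rw [card_filter_induce_sum_eq_card_indSubs_filter hΦiso G H k, ← sum_neg_one_pow_card_mul_card_filter_subset]
  refine sum_congr rfl fun X _ => ?_
  rw [countIndSub_sum_induce_compl hΦiso G H]

theorem stmt_15 {V W : Type} [Fintype V] [Fintype W]
    (Φ : ∀ (β : Type) [Fintype β], SimpleGraph β → Prop)
    (hΦiso : ∀ (β γ : Type) [Fintype β] [Fintype γ]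
      (A : SimpleGraph β) (B : SimpleGraph γ), Nonempty (A ≃g B) → (Φ β A ↔ Φ γ B))
    (G : SimpleGraph V) (H : SimpleGraph W) (k : ℕ) (hk : 0 < k) :
    -- the number of `k`-subsets of `V(G)` whose induced subgraph satisfies `(Φ − H)`
    ((Finset.univ.filter (fun Y : Finset V =>
        Y.card = k ∧ Φ _ ((G.induce (↑Y : Set V)) ⊕g H))).card : ℤ) =
      -- equals the inclusion-exclusion sum over all subsets `X ⊆ V(H)`
      ∑ X : Finset W, (-1 : ℤ) ^ X.card *
        (countIndSub Φ (k + Fintype.card W)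
          (G ⊕g (H.induce ((↑X : Set W)ᶜ))) : ℤ) :=
  stmt_15_general Φ hΦiso G H k
end
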